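/- In a BTW sandpile cascade that forms a finite tree G†, a non-root node v cannot topple an n-th time before receiving an n-th grain from its parent. -/

import Mathlib

namespace BTW

/-- All data specifying one realization of a BTW sandpile cascade on a finite graph:
the graph `G`, which nodes are sinks, the per-grain dissipation realization `diss`
(`diss u v k = true` means the `k`-th grain sent from `u` to `v` dissipates in transit),
the initial sand configuration `init`, and the `root` on which one extra grain is dropped. -/
structure Cascade (V : Type*) where
  G : SimpleGraph V
  adjDec : DecidableRel G.Adj
  sink : V → Bool
  diss : V → V → ℕ → Bool
  init : V → ℕ
  root : V

attribute [instance] Cascade.adjDec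

/-- Running tallies of a cascade: current grains held, cumulative topplings
(= grains sent along each incident edge), and cumulative grains received per ordered edge. -/
structure Config (V : Type*) where
  held : V → ℕ
  sentC : V → ℕ
  recvC : V → V → ℕ

variable {V : Type*} [Fintype V] [DecidableEq V]

/-- Number of grains, among those with indices in `[a, b)` sent from `u` to `v`,
that are not dissipated. -/
def arrivals (diss : V → V → ℕ → Bool) (u v : V) (a b : ℕ) : ℕ :=
  ((Finset.Ico a b).filter fun k => diss u v k = false).card

/-- A node holding at least `deg` grains immediately topples as many times as possible
(capacity is `deg − 1`); sinks never topple. -/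
def Cascade.tops (c : Cascade V) (cf : Config V) (v : V) : ℕ :=
  if c.sink v then 0 else cf.held v / c.G.degree v

/-- One synchronous step of the cascade: every over-capacity node topples,
sending one grain toward each neighbor per toppling; each grain dissipates or arrives
according to `c.diss`. -/
def Cascade.step (c : Cascade V) (cf : Config V) : Config V where
  held v := (cf.held v - c.G.degree v * c.tops cf v) +
    ∑ u ∈ c.G.neighborFinset v, arrivals c.diss u v (cf.sentC u) (cf.sentC u + c.tops cf u)
  sentC v := cf.sentC v + c.tops cf v
  recvC u v := cf.recvC u v +
    if c.G.Adj u v then arrivals c.diss u v (cf.sentC u) (cf.sentC u + c.tops cf u) else 0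

/-- The state of the cascade at (discrete) time `t`; at time `0` one grain is dropped on the root. -/
def Cascade.state (c : Cascade V) : ℕ → Config V
  | 0 => ⟨fun v => c.init v + if v = c.root then 1 else 0, fun _ => 0, fun _ _ => 0⟩
  | t + 1 => c.step (c.state t)

/-- Number of times `v` has toppled by time `t`. -/
def Cascade.topplesBy (c : Cascade V) (t : ℕ) (v : V) : ℕ := (c.state t).sentC v

/-- Number of grains `v` has received from `u` by time `t`. -/
def Cascade.recvBy (c : Cascade V) (t : ℕ) (u v : V) : ℕ := (c.state t).recvC u v

/-- Number of grains sent from `u` toward `v` by time `t`. -/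
def Cascade.sentBy (c : Cascade V) (t : ℕ) (u v : V) : ℕ :=
  if c.G.Adj u v then c.topplesBy t u else 0

/-- `v` initially holds exactly its capacity `deg v − 1` of grains. -/
def Cascade.AtCap (c : Cascade V) (v : V) : Prop := c.init v + 1 = c.G.degree v

/-- `v` topples at least once during the cascade. -/
def Cascade.Topples (c : Cascade V) (v : V) : Prop := ∃ t, 0 < c.topplesBy t v

/-- The area of the cascade: the number of distinct nodes that topple. -/
noncomputable def Cascade.area (c : Cascade V) : ℕ := Set.ncard {v | c.Topples v}

/-- `v` is a node of the graph `G†`: the root, a toppling node, or a neighbor of a toppling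
node (equivalently, a node toward which sand is sent, or the root). -/
def Cascade.InDagger (c : Cascade V) (v : V) : Prop :=
  v = c.root ∨ ∃ u, c.G.Adj u v ∧ c.Topples u

/-- The graph `G†`: edges of `G` along which sand is sent, i.e. edges with at least one
toppling endpoint (other nodes are isolated in this graph). -/
def Cascade.daggerGraph (c : Cascade V) : SimpleGraph V where
  Adj a b := c.G.Adj a b ∧ (c.Topples a ∨ c.Topples b)
  symm := ⟨fun a b h => ⟨h.1.symm, h.2.symm⟩⟩
  loopless := ⟨fun a h => c.G.loopless.irrefl a h.1⟩

/-- The cascade forms a finite tree `G†`: the graph `G†` is acyclic and all its nodes are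
connected to the root within it. -/
def Cascade.FormsTree (c : Cascade V) : Prop :=
  c.daggerGraph.IsAcyclic ∧ ∀ v, c.InDagger v → c.daggerGraph.Reachable c.root v

/-- `u` is the parent of `v`: `u` is the neighbor of `v` whose toppling first sent a grain
toward `v` (at some time `u` has sent sand toward `v` while no other node has). -/
def Cascade.IsParent (c : Cascade V) (u v : V) : Prop :=
  ∃ t, 0 < c.sentBy t u v ∧ ∀ w, w ≠ u → c.sentBy t w v = 0

/-- `d` is a descendant of `v`: iterating the parent map starting from `d` reaches `v`. -/
def Cascade.IsDescendant (c : Cascade V) (d v : V) : Prop :=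
  Relation.TransGen (fun a b => c.IsParent b a) d v

end BTW

/-!
Root the tree `G†` at the root of the cascade. The invariant, proved by induction on time, is
that every non-root node has toppled at most as often as it has received grains from its tree
parent. A grain reaching `v` from a tree child `x` was sent by a toppling of `x`, and by the
invariant for `x` such topplings are paid for by grains that `x` received from `v`; so up to
time `t` every neighbor of `v` has delivered at most as many grains as the tree parent has, and
conservation of sand with `init v < deg v` bounds the topplings of `v` at time `t + 1`. It
remains to see that the dynamical parent is the tree parent: if it were a tree child of `v`, the
invariant would make it wait for `v`, and `v` in turn for its own tree parent, which had sent
nothing.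
-/

namespace SimpleGraph

variable {V : Type*} {H : SimpleGraph V} {r u v x : V}

def IsTreeParent (H : SimpleGraph V) (r u v : V) : Prop :=
  H.Adj u v ∧ ∃ p : H.Walk r u, p.IsPath ∧ v ∉ p.support

theorem IsTreeParent.ne_root (h : H.IsTreeParent r u v) : v ≠ r := by
  obtain ⟨-, p, -, hv⟩ := h
  rintro rfl
  exact hv p.start_mem_support

theorem IsTreeParent.unique (hH : H.IsAcyclic) {u' : V} (h : H.IsTreeParent r u v)
    (h' : H.IsTreeParent r u' v) : u = u' := by
  obtain ⟨e, p, hp, hv⟩ := h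
  obtain ⟨e', p', hp', hv'⟩ := h'
  have hpaths := (hH.subsingleton_path r v).elim
    ⟨p.concat e, hp.concat hv e⟩ ⟨p'.concat e', hp'.concat hv' e'⟩
  exact (Walk.concat_inj (congrArg Subtype.val hpaths)).1

theorem exists_isTreeParent (hr : H.Reachable r v) (hv : v ≠ r) :
    ∃ w, H.IsTreeParent r w v := by
  obtain ⟨p, hp⟩ := hr.exists_isPath
  have hne : ¬p.Nil := fun hnil => hv hnil.eq.symm
  have hadj := p.adj_penultimate hne
  have hcons : (p.dropLast.concat hadj).IsPath := by rwa [Walk.concat_dropLast]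
  exact ⟨_, hadj, p.dropLast, ((Walk.concat_isPath_iff hadj).1 hcons)⟩

theorem isTreeParent_or_isTreeParent [DecidableEq V] (hr : H.Reachable r v) (hadj : H.Adj x v) :
    H.IsTreeParent r x v ∨ H.IsTreeParent r v x := by
  obtain ⟨p, hp⟩ := hr.exists_isPath
  by_cases hx : x ∈ p.support
  · exact .inl ⟨hadj, p.takeUntil x hx, hp.takeUntil hx,
      Walk.endpoint_notMem_support_takeUntil hp hx hadj.ne.symm⟩
  · exact .inr ⟨hadj.symm, p, hp, hx⟩

end SimpleGraph

namespace BTW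

variable {V : Type*}

theorem arrivals_le (diss : V → V → ℕ → Bool) (u v : V) (a b : ℕ) :
    arrivals diss u v a b ≤ b - a :=
  (Finset.card_filter_le _ _).trans (Nat.card_Ico a b).le

theorem arrivals_add (diss : V → V → ℕ → Bool) (u v : V) {a b e : ℕ} (hab : a ≤ b)
    (hbe : b ≤ e) : arrivals diss u v a b + arrivals diss u v b e = arrivals diss u v a e := by
  unfold arrivals
  rw [← Finset.card_union_of_disjoint
      (Finset.disjoint_filter_filter (Finset.Ico_disjoint_Ico_consecutive a b e)),
    ← Finset.filter_union, Finset.Ico_union_Ico_eq_Ico hab hbe]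

namespace Cascade

variable [Fintype V]

theorem degree_mul_tops_le {c : Cascade V} (hsink : ∀ w, c.sink w = false) (cf : Config V)
    (v : V) : c.G.degree v * c.tops cf v ≤ cf.held v := by
  simpa [tops, hsink v, Nat.mul_comm] using Nat.div_mul_le_self (cf.held v) (c.G.degree v)

variable [DecidableEq V] (c : Cascade V)

theorem recvBy_le_recvBy_succ (t : ℕ) (u v : V) : c.recvBy t u v ≤ c.recvBy (t + 1) u v :=
  Nat.le_add_right _ _

theorem recvBy_eq (t : ℕ) (u v : V) :
    c.recvBy t u v = if c.G.Adj u v then arrivals c.diss u v 0 (c.topplesBy t u) else 0 := by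
  induction t with
  | zero => simp [recvBy, state, topplesBy, arrivals]
  | succ t ih =>
    change c.recvBy t u v + _ = _
    rw [ih]
    split_ifs
    · exact arrivals_add c.diss u v (Nat.zero_le _) (Nat.le_add_right _ _)
    · rfl

theorem recvBy_le_topplesBy (t : ℕ) (u v : V) : c.recvBy t u v ≤ c.topplesBy t u := by
  rw [recvBy_eq]
  split_ifs
  · exact (arrivals_le _ _ _ _ _).trans (Nat.sub_le _ _)
  · exact Nat.zero_le _

theorem adj_of_recvBy_pos {t : ℕ} {u v : V} (h : 0 < c.recvBy t u v) : c.G.Adj u v := by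
  by_contra hadj
  simp [recvBy_eq, hadj] at h

variable {c}

theorem held_add_degree_mul_topplesBy (hsink : ∀ w, c.sink w = false) (t : ℕ) (v : V) :
    (c.state t).held v + c.G.degree v * c.topplesBy t v
      = c.init v + (if v = c.root then 1 else 0) +
        ∑ x ∈ c.G.neighborFinset v, c.recvBy t x v := by
  induction t with
  | zero => simp [state, topplesBy, recvBy]
  | succ t ih =>
    have hrecv : ∀ x ∈ c.G.neighborFinset v, c.recvBy (t + 1) x v = c.recvBy t x v +
        arrivals c.diss x v ((c.state t).sentC x) ((c.state t).sentC x + c.tops (c.state t) x) :=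
      fun x hx => by
        simp [recvBy, state, step, ((c.G.mem_neighborFinset v x).1 hx).symm]
    have hheld := degree_mul_tops_le hsink (c.state t) v
    rw [Finset.sum_congr rfl hrecv, Finset.sum_add_distrib]
    change (c.state t).held v - _ + _ + c.G.degree v * (c.topplesBy t v + _) = _
    rw [Nat.mul_add]
    omega

theorem degree_mul_topplesBy_succ_le (hsink : ∀ w, c.sink w = false) (t : ℕ) (v : V) :
    c.G.degree v * c.topplesBy (t + 1) v
      ≤ c.init v + (if v = c.root then 1 else 0) +
        ∑ x ∈ c.G.neighborFinset v, c.recvBy t x v := by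
  rw [← held_add_degree_mul_topplesBy hsink]
  change _ * (c.topplesBy t v + _) ≤ _
  have := degree_mul_tops_le hsink (c.state t) v
  rw [Nat.mul_add]
  omega

theorem daggerGraph_adj_of_topples {x v : V} (hadj : c.G.Adj x v) (hx : c.Topples x) :
    c.daggerGraph.Adj x v :=
  ⟨hadj, .inl hx⟩

theorem FormsTree.reachable_of_topples (htree : c.FormsTree) {x v : V} (hadj : c.G.Adj x v)
    (hx : c.Topples x) : c.daggerGraph.Reachable c.root v :=
  htree.2 v (.inr ⟨x, hadj, hx⟩)

theorem topplesBy_le_recvBy_of_isTreeParent (hsink : ∀ w, c.sink w = false)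
    (hinit : ∀ w, c.init w < c.G.degree w) (htree : c.FormsTree) (t : ℕ) :
    ∀ {w v : V}, c.daggerGraph.IsTreeParent c.root w v →
      c.topplesBy t v ≤ c.recvBy t w v := by
  induction t with
  | zero => intro w v _; exact Nat.zero_le _
  | succ t ih =>
    intro w v hwv
    set R := c.recvBy t w v
    have hrecv : ∀ x ∈ c.G.neighborFinset v, c.recvBy t x v ≤ R := by
      intro x _
      rcases Nat.eq_zero_or_pos (c.recvBy t x v) with h0 | hpos
      · exact h0 ▸ Nat.zero_le _
      have hadj := c.adj_of_recvBy_pos hpos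
      have hx : c.Topples x := ⟨t, hpos.trans_le (c.recvBy_le_topplesBy t x v)⟩
      rcases SimpleGraph.isTreeParent_or_isTreeParent (htree.reachable_of_topples hadj hx)
          (daggerGraph_adj_of_topples hadj hx) with hxv | hvx
      · exact (hxv.unique htree.1 hwv) ▸ le_rfl
      · calc c.recvBy t x v ≤ c.topplesBy t x := c.recvBy_le_topplesBy t x v
          _ ≤ c.recvBy t v x := ih hvx
          _ ≤ c.topplesBy t v := c.recvBy_le_topplesBy t v x
          _ ≤ R := ih hwv
    have hsum : ∑ x ∈ c.G.neighborFinset v, c.recvBy t x v ≤ c.G.degree v * R := by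
      simpa [SimpleGraph.card_neighborFinset_eq_degree] using Finset.sum_le_card_nsmul _ _ R hrecv
    have hstep := degree_mul_topplesBy_succ_le hsink t v
    rw [if_neg hwv.ne_root] at hstep
    have hlt : c.G.degree v * c.topplesBy (t + 1) v < c.G.degree v * (R + 1) := by
      have := hinit v
      rw [Nat.mul_succ]
      omega
    exact (Nat.le_of_lt_succ (Nat.lt_of_mul_lt_mul_left hlt)).trans
      (c.recvBy_le_recvBy_succ t w v)

theorem IsParent.isTreeParent (hsink : ∀ w, c.sink w = false)
    (hinit : ∀ w, c.init w < c.G.degree w) (htree : c.FormsTree) {u v : V} (hv : v ≠ c.root)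
    (hp : c.IsParent u v) : c.daggerGraph.IsTreeParent c.root u v := by
  obtain ⟨t, hsent, honly⟩ := hp
  have hadj : c.G.Adj u v := by by_contra h; simp [sentBy, h] at hsent
  rw [sentBy, if_pos hadj] at hsent
  have hu : c.Topples u := ⟨t, hsent⟩
  have hreach := htree.reachable_of_topples hadj hu
  obtain ⟨w, hwv⟩ := SimpleGraph.exists_isTreeParent hreach hv
  obtain rfl | hwu := eq_or_ne w u
  · exact hwv
  have huv : c.daggerGraph.IsTreeParent c.root v u :=
    (SimpleGraph.isTreeParent_or_isTreeParent hreach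
      (daggerGraph_adj_of_topples hadj hu)).resolve_left fun huv => hwu (hwv.unique htree.1 huv)
  have hw : c.topplesBy t w = 0 := by simpa [sentBy, hwv.1.1] using honly w hwu
  have := (topplesBy_le_recvBy_of_isTreeParent hsink hinit htree t huv).trans
    (c.recvBy_le_topplesBy t v u)
  have := (topplesBy_le_recvBy_of_isTreeParent hsink hinit htree t hwv).trans
    (c.recvBy_le_topplesBy t w v)
  exfalso
  omega

end Cascade

end BTW

/-- In a cascade that forms a finite tree `G†`, a non-root node `v` cannot topple
an `n`-th time before receiving an `n`-th grain from its parent `u`. -/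
theorem stmt5 {V : Type*} [Fintype V] [DecidableEq V] (c : BTW.Cascade V)
    (hsink : ∀ w, c.sink w = false)
    (hinit : ∀ w, c.init w < c.G.degree w)
    (htree : c.FormsTree)
    (u v : V) (hv : v ≠ c.root) (hp : c.IsParent u v)
    (n t : ℕ)
    (h : n ≤ c.topplesBy t v) :
    n ≤ c.recvBy t u v :=
  h.trans <| BTW.Cascade.topplesBy_le_recvBy_of_isTreeParent hsink hinit htree t
    (hp.isTreeParent hsink hinit htree hv)
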